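/- arXiv:1907.09356 — 2 statements merged into one kernel-verified Lean document; each statement's English description precedes it below -/
import Mathlib

section
/- Let x ∈ ℝ^d and let s ∈ {−1, +1}^d be any sign vector with s_i·x_i = |x_i| for all i. Then ‖(‖x‖₁/d)·s − x‖₂² = ‖x‖₂² − ‖x‖₁²/d. Consequently, if x ≠ 0, the scaled sign compression operator sign(x) := (‖x‖₁/d)·s satisfies ‖sign(x) − x‖₂² ≤ (1 − δ(x))·‖x‖₂² with δ(x) = ‖x‖₁²/(d·‖x‖₂²) ∈ (0, 1]. -/
open Finset

/-- The scaled sign compression operator `sign(x) := (‖x‖₁/d)·s`, where `s` is any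
sign vector with `s_i·x_i = |x_i|`, satisfies
`‖sign(x) − x‖₂² = ‖x‖₂² − ‖x‖₁²/d`; consequently, for `x ≠ 0`, it is a
`δ`-compression operator with `δ = ‖x‖₁²/(d·‖x‖₂²) ∈ (0,1]`. -/
theorem sign_compression (d : ℕ) (hd : 0 < d) (x s : Fin d → ℝ)
    (hs : ∀ i, s i = 1 ∨ s i = -1)
    (hsx : ∀ i, s i * x i = |x i|) :
    (∑ i, ((∑ j, |x j|) / d * s i - x i) ^ 2
        = ∑ i, x i ^ 2 - (∑ j, |x j|) ^ 2 / d) ∧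
    (x ≠ 0 →
      0 < (∑ j, |x j|) ^ 2 / (d * ∑ i, x i ^ 2) ∧
      (∑ j, |x j|) ^ 2 / (d * ∑ i, x i ^ 2) ≤ 1 ∧
      ∑ i, ((∑ j, |x j|) / d * s i - x i) ^ 2
        ≤ (1 - (∑ j, |x j|) ^ 2 / (d * ∑ i, x i ^ 2)) * ∑ i, x i ^ 2) := by
  set A := ∑ j, |x j| with hA
  have hd' : (0:ℝ) < d := Nat.cast_pos.mpr hd
  have hs2 : ∀ i, s i ^ 2 = 1 := by
    intro i; rcases hs i with h | h <;> simp [h]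
  have key : ∑ i, (A / d * s i - x i) ^ 2 = ∑ i, x i ^ 2 - A ^ 2 / d := by
    have expand : ∀ i, (A / d * s i - x i) ^ 2
        = (A / d) ^ 2 * s i ^ 2 - 2 * (A / d) * (s i * x i) + x i ^ 2 := by
      intro i; ring
    calc ∑ i, (A / d * s i - x i) ^ 2
        = ∑ i, ((A / d) ^ 2 * s i ^ 2 - 2 * (A / d) * (s i * x i) + x i ^ 2) := by
          exact Finset.sum_congr rfl fun i _ => expand i
      _ = ∑ i, ((A / d) ^ 2 - 2 * (A / d) * |x i| + x i ^ 2) := by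
          refine Finset.sum_congr rfl fun i _ => ?_
          rw [hs2 i, hsx i]; ring
      _ = d * (A / d) ^ 2 - 2 * (A / d) * A + ∑ i, x i ^ 2 := by
          rw [Finset.sum_add_distrib, Finset.sum_sub_distrib, Finset.sum_const,
            ← Finset.mul_sum, ← hA]
          simp [Finset.card_univ, mul_comm]
      _ = ∑ i, x i ^ 2 - A ^ 2 / d := by field_simp; ring
  refine ⟨key, fun hx => ?_⟩
  have hxi : ∃ i, x i ≠ 0 := by
    by_contra h; push_neg at h; exact hx (funext h)
  obtain ⟨i0, hi0⟩ := hxi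
  have hsum2 : 0 < ∑ i, x i ^ 2 :=
    Finset.sum_pos' (fun i _ => sq_nonneg _) ⟨i0, Finset.mem_univ _, by positivity⟩
  have hApos : 0 < A := by
    refine Finset.sum_pos' (fun i _ => abs_nonneg _) ⟨i0, Finset.mem_univ _, ?_⟩
    exact abs_pos.mpr hi0
  have hCS : A ^ 2 ≤ d * ∑ i, x i ^ 2 := by
    have h := sq_sum_le_card_mul_sum_sq (s := (Finset.univ : Finset (Fin d)))
      (f := fun i => |x i|)
    simpa [hA, Finset.card_univ, sq_abs] using h
  have hδle : A ^ 2 / (d * ∑ i, x i ^ 2) ≤ 1 := by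
    rw [div_le_one (by positivity)]; exact hCS
  refine ⟨by positivity, hδle, ?_⟩
  rw [key]
  have : (1 - A ^ 2 / (d * ∑ i, x i ^ 2)) * ∑ i, x i ^ 2
      = ∑ i, x i ^ 2 - A ^ 2 / d := by
    field_simp
  rw [this]
end

section
/- Fix n workers with losses f_i : ℝ^d → ℝ (each L-smooth), f := (1/n)Σ f_i, stochastic gradient oracles with variance bound σ_i² and second-moment bound G², and stepsize η > 0. Fix points x₁, …, x_n ∈ ℝ^d with average x̄ := (1/n)Σ x_i, and let ξ₁ ∼ D₁, …, ξ_n ∼ D_n be independent. Then E[f(x̄ − (η/n)·Σ_{i=1}^n ∇F_i(x_i, ξ_i))] ≤ f(x̄) − η·(1/2 − η·L)·‖∇f(x̄)‖² + (η·L²/2 + η²·L³)·(1/n)·Σ_{i=1}^n ‖x̄ − x_i‖² + L·η²·σ̄²/(2n), where σ̄² := (1/n)Σ σ_i². -/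
/-!
Average the `L`-smooth losses into `F`, whose gradient is the average of the gradients and is
again `L`-Lipschitz, and let `S` be the averaged stochastic gradient. Integrate the quadratic
upper bound `F (x̄ - η S) ≤ F x̄ - η ⟪∇F x̄, S⟫ + L η² ‖S‖² / 2`. The mean of `S` is
`h = (1/n) Σ ∇f_i(x_i)`, and by independence the cross terms of its variance vanish, so its second
moment is at most `‖h‖² + σ̄² / n`. Finally `h` differs from `∇F x̄` by at most
`L² (1/n) Σ ‖x̄ - x_i‖²` in squared norm, and the parallelogram law absorbs the mismatch between
`h` and `∇F x̄` in `⟪∇F x̄, h⟫` and `‖h‖²`.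
-/

open MeasureTheory ProbabilityTheory Finset

section InnerProductSpace

variable {E : Type*} [NormedAddCommGroup E] [InnerProductSpace ℝ E]

theorem MeasureTheory.MemLp.integrable_inner {Ω : Type*} [MeasurableSpace Ω] {μ : Measure Ω}
    {X Y : Ω → E} (hX : MemLp X 2 μ) (hY : MemLp Y 2 μ) :
    Integrable (fun ω => inner ℝ (X ω) (Y ω)) μ :=
  memLp_one_iff_integrable.1 ((innerSL ℝ).memLp_of_bilin 1 hX hY)

theorem norm_average_sq_le {ι : Type*} (s : Finset ι) (v : ι → E) :
    ‖(#s : ℝ)⁻¹ • ∑ i ∈ s, v i‖ ^ 2 ≤ (#s : ℝ)⁻¹ * ∑ i ∈ s, ‖v i‖ ^ 2 := by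
  have hjensen : ‖∑ i ∈ s, v i‖ ^ 2 ≤ #s * ∑ i ∈ s, ‖v i‖ ^ 2 :=
    (pow_le_pow_left₀ (norm_nonneg _) (norm_sum_le s v) 2).trans sq_sum_le_card_mul_sum_sq
  rw [norm_smul, mul_pow, norm_inv, RCLike.norm_natCast]
  calc (#s : ℝ)⁻¹ ^ 2 * ‖∑ i ∈ s, v i‖ ^ 2 ≤ (#s : ℝ)⁻¹ ^ 2 * (#s * ∑ i ∈ s, ‖v i‖ ^ 2) := by
        gcongr
    _ = (#s : ℝ)⁻¹ * ∑ i ∈ s, ‖v i‖ ^ 2 := by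
        rcases eq_or_ne (#s : ℝ) 0 with h | h
        · simp [h]
        · field_simp

theorem neg_inner_add_norm_sq_le (g h : E) {η L : ℝ} (hη : 0 ≤ η) (hL : 0 ≤ L) :
    -η * inner ℝ g h + L * η ^ 2 / 2 * ‖h‖ ^ 2
      ≤ -η * (1 / 2 - η * L) * ‖g‖ ^ 2 + (η / 2 + η ^ 2 * L) * ‖h - g‖ ^ 2 := by
  have hpar : 0 ≤ ‖(2 : ℝ) • g - h‖ ^ 2 := sq_nonneg _
  rw [norm_sub_sq_real] at hpar ⊢
  rw [norm_smul, inner_smul_left] at hpar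
  simp only [Real.norm_ofNat, RCLike.conj_to_real, real_inner_comm g h] at hpar ⊢
  nlinarith [mul_nonneg hη hL, mul_nonneg (mul_nonneg hη hη) hL, sq_nonneg ‖h‖]

variable [CompleteSpace E]

theorem abs_sub_sub_inner_gradient_le {f : E → ℝ} (hf : Differentiable ℝ f) {L : ℝ}
    (hlip : ∀ a b, ‖gradient f b - gradient f a‖ ≤ L * ‖b - a‖) (x y : E) :
    |f y - f x - inner ℝ (gradient f x) (y - x)| ≤ L / 2 * ‖y - x‖ ^ 2 := by
  set v := y - x
  have hφ : ∀ t : ℝ, HasDerivAt (fun s : ℝ => f (x + s • v) - f x - s * inner ℝ (gradient f x) v)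
      (inner ℝ (gradient f (x + t • v) - gradient f x) v) t := by
    intro t
    have hline : HasDerivAt (fun s : ℝ => x + s • v) v t := by
      simpa using ((hasDerivAt_id t).smul_const v).const_add x
    have hcomp :
        HasDerivAt (fun s : ℝ => f (x + s • v)) (inner ℝ (gradient f (x + t • v)) v) t := by
      simpa [Function.comp_def] using (hf _).hasGradientAt.hasFDerivAt.comp_hasDerivAt t hline
    exact ((hcomp.sub_const (f x)).fun_sub ((hasDerivAt_id' t).mul_const _)).congr_deriv
      (by simp [inner_sub_left])
  have hB : ∀ t : ℝ, HasDerivAt (fun s : ℝ => L / 2 * ‖v‖ ^ 2 * s ^ 2) (L * ‖v‖ ^ 2 * t) t :=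
    fun t => ((hasDerivAt_pow 2 t).const_mul _).congr_deriv (by simp; ring)
  have hbound : ∀ t ∈ Set.Ico (0 : ℝ) 1,
      ‖inner ℝ (gradient f (x + t • v) - gradient f x) v‖ ≤ L * ‖v‖ ^ 2 * t := fun t ht =>
    calc ‖inner ℝ (gradient f (x + t • v) - gradient f x) v‖
        ≤ ‖gradient f (x + t • v) - gradient f x‖ * ‖v‖ := norm_inner_le_norm _ _
      _ ≤ L * ‖x + t • v - x‖ * ‖v‖ := by gcongr; exact hlip _ _
      _ = L * ‖v‖ ^ 2 * t := by
        rw [add_sub_cancel_left, norm_smul, Real.norm_of_nonneg ht.1]; ring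
  simpa [v] using image_norm_le_of_norm_deriv_right_le_deriv_boundary
    (fun t _ => (hφ t).continuousAt.continuousWithinAt) (fun t _ => (hφ t).hasDerivWithinAt)
    (by simp) hB hbound (Set.right_mem_Icc.2 zero_le_one)

theorem hasGradientAt_const_mul_sum {ι : Type*} (s : Finset ι) {f : ι → E → ℝ} {z : E}
    (hf : ∀ i ∈ s, DifferentiableAt ℝ (f i) z) (c : ℝ) :
    HasGradientAt (fun y => c * ∑ i ∈ s, f i y) (c • ∑ i ∈ s, gradient (f i) z) z := by
  have h := ((HasFDerivAt.fun_sum fun i hi => (hf i hi).hasFDerivAt).const_mul c).hasGradientAt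
  simpa only [map_smul, map_sum, gradient] using h

theorem norm_gradient_average_sub_le {ι : Type*} [Fintype ι] [Nonempty ι] {f : ι → E → ℝ}
    (hf : ∀ i, Differentiable ℝ (f i)) {L : ℝ}
    (hlip : ∀ i a b, ‖gradient (f i) b - gradient (f i) a‖ ≤ L * ‖b - a‖) (a b : E) :
    ‖gradient (fun y => (Fintype.card ι : ℝ)⁻¹ * ∑ i, f i y) b
      - gradient (fun y => (Fintype.card ι : ℝ)⁻¹ * ∑ i, f i y) a‖ ≤ L * ‖b - a‖ := by
  have hgrad z := (hasGradientAt_const_mul_sum univ (fun i _ => (hf i).differentiableAt)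
    (Fintype.card ι : ℝ)⁻¹ (z := z)).gradient
  have hcard : (0 : ℝ) < Fintype.card ι := by exact_mod_cast Fintype.card_pos
  rw [hgrad, hgrad, ← smul_sub, ← sum_sub_distrib, norm_smul, norm_inv, RCLike.norm_natCast,
    inv_mul_le_iff₀ hcard]
  calc ‖∑ i, (gradient (f i) b - gradient (f i) a)‖ ≤ ∑ i : ι, L * ‖b - a‖ :=
        (norm_sum_le _ _).trans (sum_le_sum fun i _ => hlip i a b)
    _ = Fintype.card ι * (L * ‖b - a‖) := by simp

theorem norm_average_gradient_sub_sq_le {ι : Type*} (s : Finset ι) {f : ι → E → ℝ} {L : ℝ}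
    (hlip : ∀ i a b, ‖gradient (f i) b - gradient (f i) a‖ ≤ L * ‖b - a‖) (x : ι → E) (z : E) :
    ‖(#s : ℝ)⁻¹ • ∑ i ∈ s, gradient (f i) (x i) - (#s : ℝ)⁻¹ • ∑ i ∈ s, gradient (f i) z‖ ^ 2
      ≤ L ^ 2 * ((#s : ℝ)⁻¹ * ∑ i ∈ s, ‖z - x i‖ ^ 2) := by
  rw [← smul_sub, ← sum_sub_distrib]
  calc _ ≤ (#s : ℝ)⁻¹ * ∑ i ∈ s, ‖gradient (f i) (x i) - gradient (f i) z‖ ^ 2 :=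
        norm_average_sq_le s _
    _ ≤ (#s : ℝ)⁻¹ * ∑ i ∈ s, (L * ‖z - x i‖) ^ 2 := by
        gcongr with i
        rw [norm_sub_rev z]
        exact hlip i z (x i)
    _ = L ^ 2 * ((#s : ℝ)⁻¹ * ∑ i ∈ s, ‖z - x i‖ ^ 2) := by
        simp_rw [mul_pow, ← mul_sum]
        ring

end InnerProductSpace

section Expectation

variable {Ω E : Type*} [MeasurableSpace Ω] {μ : Measure Ω}
  [NormedAddCommGroup E] [InnerProductSpace ℝ E] [CompleteSpace E]

theorem integral_norm_sq_eq_norm_integral_sq_add [IsProbabilityMeasure μ] {X : Ω → E}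
    (hX : MemLp X 2 μ) :
    ∫ ω, ‖X ω‖ ^ 2 ∂μ = ‖μ[X]‖ ^ 2 + ∫ ω, ‖X ω - μ[X]‖ ^ 2 ∂μ := by
  set m := μ[X]
  have hX1 : Integrable X μ := hX.integrable one_le_two
  have hcross : Integrable (fun ω => 2 * inner ℝ m (X ω - m)) μ :=
    ((hX1.sub (integrable_const m)).const_inner m).const_mul 2
  have hdev : Integrable (fun ω => ‖X ω - m‖ ^ 2) μ := (hX.sub (memLp_const m)).norm.integrable_sq
  have hexp ω : ‖X ω‖ ^ 2 = ‖m‖ ^ 2 + 2 * inner ℝ m (X ω - m) + ‖X ω - m‖ ^ 2 := by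
    rw [← norm_add_sq_real, add_sub_cancel]
  have hcentered : ∫ ω, inner ℝ m (X ω - m) ∂μ = 0 := by
    rw [integral_inner (f := fun ω => X ω - m) (hX1.sub (integrable_const m)),
      integral_sub hX1 (integrable_const m)]
    simp [m]
  simp_rw [hexp]
  rw [integral_add ?_ hdev, integral_add (integrable_const _) hcross, integral_const_mul, hcentered]
  · simp
  · exact (integrable_const _).add hcross

theorem integral_norm_sum_sq_of_iIndepFun [IsFiniteMeasure μ] [MeasurableSpace E] [BorelSpace E]
    {ι : Type*} {Z : ι → Ω → E} (hZ : iIndepFun Z μ) (hZ2 : ∀ i, MemLp (Z i) 2 μ)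
    (hmean : ∀ i, μ[Z i] = 0) (s : Finset ι) :
    ∫ ω, ‖∑ i ∈ s, Z i ω‖ ^ 2 ∂μ = ∑ i ∈ s, ∫ ω, ‖Z i ω‖ ^ 2 ∂μ := by
  have hexp ω : ‖∑ i ∈ s, Z i ω‖ ^ 2 = ∑ i ∈ s, ∑ j ∈ s, inner ℝ (Z i ω) (Z j ω) := by
    rw [← real_inner_self_eq_norm_sq, sum_inner]
    simp_rw [inner_sum]
  have hcross i j (hij : i ≠ j) : ∫ ω, inner ℝ (Z i ω) (Z j ω) ∂μ = 0 := by
    have := (hZ.indepFun hij).integral_bilin ((hZ2 i).integrable one_le_two)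
      ((hZ2 j).integrable one_le_two) (innerSL ℝ)
    rw [hmean, hmean] at this
    exact this.trans (by simp)
  simp_rw [hexp]
  rw [integral_finsetSum _ fun i _ => integrable_finsetSum _ fun j _ =>
    (hZ2 i).integrable_inner (hZ2 j)]
  refine sum_congr rfl fun i hi => ?_
  rw [integral_finsetSum _ fun j _ => (hZ2 i).integrable_inner (hZ2 j),
    sum_eq_single_of_mem i hi fun j _ hji => hcross i j hji.symm]
  simp_rw [real_inner_self_eq_norm_sq]

theorem integral_comp_add_le_of_lipschitz_gradient [IsProbabilityMeasure μ] {F : E → ℝ}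
    (hF : Differentiable ℝ F) {L : ℝ} (hlip : ∀ a b, ‖gradient F b - gradient F a‖ ≤ L * ‖b - a‖)
    {S : Ω → E} (hS : MemLp S 2 μ) (x : E) :
    ∫ ω, F (x + S ω) ∂μ ≤ F x + inner ℝ (gradient F x) μ[S] + L / 2 * ∫ ω, ‖S ω‖ ^ 2 ∂μ := by
  set g := gradient F x
  have hpt ω : |F (x + S ω) - (F x + inner ℝ g (S ω))| ≤ L / 2 * ‖S ω‖ ^ 2 := by
    simpa only [add_sub_cancel_left, sub_sub] using
      abs_sub_sub_inner_gradient_le hF hlip x (x + S ω)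
  have hS1 : Integrable S μ := hS.integrable one_le_two
  have hlin : Integrable (fun ω => F x + inner ℝ g (S ω)) μ :=
    (integrable_const _).add (hS1.const_inner g)
  have hsq : Integrable (fun ω => L / 2 * ‖S ω‖ ^ 2) μ := hS.norm.integrable_sq.const_mul _
  have hint : Integrable (fun ω => F (x + S ω)) μ := by
    have hrem : Integrable (fun ω => F (x + S ω) - (F x + inner ℝ g (S ω))) μ :=
      hsq.mono' ((hF.continuous.comp_aestronglyMeasurable (hS.1.const_add x)).sub hlin.1)
        (ae_of_all _ hpt)
    refine (hrem.add hlin).congr (ae_of_all _ fun ω => ?_)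
    simp
  calc ∫ ω, F (x + S ω) ∂μ ≤ ∫ ω, F x + inner ℝ g (S ω) + L / 2 * ‖S ω‖ ^ 2 ∂μ :=
        integral_mono hint (hlin.add hsq) fun ω => by
          linarith [(le_abs_self _).trans (hpt ω)]
    _ = F x + inner ℝ g μ[S] + L / 2 * ∫ ω, ‖S ω‖ ^ 2 ∂μ := by
        rw [integral_add hlin hsq, integral_add (integrable_const _) (hS1.const_inner g),
          integral_inner hS1, integral_const_mul]
        simp

end Expectation

section Product

variable {ι : Type*} [Fintype ι] {Ξ : ι → Type*} [∀ i, MeasurableSpace (Ξ i)]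
  {μ : ∀ i, Measure (Ξ i)} [∀ i, IsProbabilityMeasure (μ i)] {E : Type*}

theorem memLp_sum_comp_eval [NormedAddCommGroup E] {g : ∀ i, Ξ i → E} {p : ENNReal}
    (hg : ∀ i, MemLp (g i) p (μ i)) :
    MemLp (fun ξ => ∑ i, g i (ξ i)) p (Measure.pi μ) :=
  memLp_finsetSum _ fun i _ => (hg i).comp_measurePreserving (measurePreserving_eval μ i)

theorem integral_sum_comp_eval [NormedAddCommGroup E] [NormedSpace ℝ E] {g : ∀ i, Ξ i → E}
    (hg : ∀ i, Integrable (g i) (μ i)) :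
    ∫ ξ, ∑ i, g i (ξ i) ∂Measure.pi μ = ∑ i, ∫ a, g i a ∂μ i := by
  rw [integral_finsetSum _ fun i _ => integrable_comp_eval (hg i)]
  exact sum_congr rfl fun i _ => integral_comp_eval (hg i).1

variable [NormedAddCommGroup E] [InnerProductSpace ℝ E] [CompleteSpace E] {g : ∀ i, Ξ i → E}

theorem integral_norm_sum_sq_pi (hg : ∀ i, MemLp (g i) 2 (μ i)) :
    ∫ ξ, ‖∑ i, g i (ξ i)‖ ^ 2 ∂Measure.pi μ
      = ‖∑ i, ∫ a, g i a ∂μ i‖ ^ 2 + ∑ i, ∫ a, ‖g i a - ∫ b, g i b ∂μ i‖ ^ 2 ∂μ i := by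
  borelize E
  have hdev i : MemLp (fun a => g i a - ∫ b, g i b ∂μ i) 2 (μ i) := (hg i).sub (memLp_const _)
  have hindep : iIndepFun (fun i (ξ : ∀ i, Ξ i) => g i (ξ i) - ∫ b, g i b ∂μ i) (Measure.pi μ) :=
    iIndepFun_pi fun i => (hdev i).1.aemeasurable
  have hcentered i : ∫ ξ, g i (ξ i) - ∫ b, g i b ∂μ i ∂Measure.pi μ = 0 := by
    rw [integral_comp_eval (hdev i).1, integral_sub ((hg i).integrable one_le_two)
      (integrable_const _)]
    simp
  rw [integral_norm_sq_eq_norm_integral_sq_add (memLp_sum_comp_eval hg),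
    integral_sum_comp_eval fun i => (hg i).integrable one_le_two]
  congr 1
  simp_rw [← sum_sub_distrib]
  rw [integral_norm_sum_sq_of_iIndepFun hindep
    (fun i => (hdev i).comp_measurePreserving (measurePreserving_eval μ i)) hcentered]
  exact sum_congr rfl fun i _ => integral_comp_eval (hdev i).norm.integrable_sq.1

theorem integral_norm_smul_sum_sq_le_pi (c : ℝ) (hg : ∀ i, MemLp (g i) 2 (μ i)) {σ : ι → ℝ}
    (hσ : ∀ i, ∫ a, ‖g i a - ∫ b, g i b ∂μ i‖ ^ 2 ∂μ i ≤ σ i ^ 2) :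
    ∫ ξ, ‖c • ∑ i, g i (ξ i)‖ ^ 2 ∂Measure.pi μ
      ≤ ‖c • ∑ i, ∫ a, g i a ∂μ i‖ ^ 2 + c ^ 2 * ∑ i, σ i ^ 2 := by
  simp_rw [norm_smul, mul_pow, Real.norm_eq_abs, sq_abs]
  rw [integral_const_mul, integral_norm_sum_sq_pi hg, mul_add]
  gcongr with i
  exact hσ i

end Product

theorem one_step_descent_general
    (n d : ℕ) (hn : 0 < n)
    (Ξ : Fin n → Type) [∀ i, MeasurableSpace (Ξ i)]
    (μ : ∀ i, Measure (Ξ i)) [∀ i, IsProbabilityMeasure (μ i)]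
    (f : Fin n → EuclideanSpace ℝ (Fin d) → ℝ)
    (L : ℝ) (hL : 0 ≤ L)
    (hdiff : ∀ i, Differentiable ℝ (f i))
    (hsmooth : ∀ i, ∀ x y : EuclideanSpace ℝ (Fin d),
      ‖gradient (f i) y - gradient (f i) x‖ ≤ L * ‖y - x‖)
    (G : ∀ i : Fin n, EuclideanSpace ℝ (Fin d) → Ξ i → EuclideanSpace ℝ (Fin d))
    (hGint : ∀ i x, MemLp (G i x) 2 (μ i))
    (σ : Fin n → ℝ)
    (hunbiased : ∀ i x, ∫ ξ, G i x ξ ∂(μ i) = gradient (f i) x)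
    (hvar : ∀ i x, ∫ ξ, ‖G i x ξ - gradient (f i) x‖ ^ 2 ∂(μ i) ≤ σ i ^ 2)
    (η : ℝ) (hη : 0 < η)
    (x : Fin n → EuclideanSpace ℝ (Fin d)) :
    ∫ ξ, (n : ℝ)⁻¹ * ∑ i, f i
          (((n : ℝ)⁻¹ • ∑ j, x j) - (η / n) • ∑ i, G i (x i) (ξ i))
        ∂(Measure.pi μ)
      ≤ (n : ℝ)⁻¹ * ∑ i, f i ((n : ℝ)⁻¹ • ∑ j, x j)
        - η * (1 / 2 - η * L) *
          ‖gradient (fun y => (n : ℝ)⁻¹ * ∑ i, f i y) ((n : ℝ)⁻¹ • ∑ j, x j)‖ ^ 2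
        + (η * L ^ 2 / 2 + η ^ 2 * L ^ 3) *
          ((n : ℝ)⁻¹ * ∑ i, ‖((n : ℝ)⁻¹ • ∑ j, x j) - x i‖ ^ 2)
        + L * η ^ 2 * ((n : ℝ)⁻¹ * ∑ i, σ i ^ 2) / (2 * n) := by
  have : Nonempty (Fin n) := ⟨⟨0, hn⟩⟩
  set xbar := (n : ℝ)⁻¹ • ∑ j, x j
  set F := fun y => (n : ℝ)⁻¹ * ∑ i, f i y
  set hbar := (n : ℝ)⁻¹ • ∑ i, gradient (f i) (x i)
  have hFgrad z : HasGradientAt F ((n : ℝ)⁻¹ • ∑ i, gradient (f i) z) z :=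
    hasGradientAt_const_mul_sum univ (fun i _ => (hdiff i).differentiableAt) _
  have hlipF : ∀ a b, ‖gradient F b - gradient F a‖ ≤ L * ‖b - a‖ := by
    simpa using norm_gradient_average_sub_le hdiff hsmooth
  have hbias : ‖hbar - gradient F xbar‖ ^ 2 ≤ L ^ 2 * ((n : ℝ)⁻¹ * ∑ i, ‖xbar - x i‖ ^ 2) := by
    simpa [(hFgrad xbar).gradient] using norm_average_gradient_sub_sq_le univ hsmooth x xbar
  have hscale : -(η / n) • ∑ i, gradient (f i) (x i) = -η • hbar := by
    simp only [hbar, smul_smul, div_eq_mul_inv, neg_mul]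
  have hmean : ∫ ξ, -(η / n) • ∑ i, G i (x i) (ξ i) ∂Measure.pi μ = -η • hbar := by
    rw [integral_smul, integral_sum_comp_eval fun i => (hGint i (x i)).integrable one_le_two]
    simp_rw [hunbiased, hscale]
  have hsecond := integral_norm_smul_sum_sq_le_pi (-(η / n)) (fun i => hGint i (x i)) (σ := σ)
    fun i => by rw [hunbiased]; exact hvar i (x i)
  simp_rw [hunbiased] at hsecond
  rw [hscale, norm_smul, mul_pow, Real.norm_eq_abs, sq_abs, neg_sq] at hsecond
  have hσ : L / 2 * ((η / n) ^ 2 * ∑ i, σ i ^ 2)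
      = L * η ^ 2 * ((n : ℝ)⁻¹ * ∑ i, σ i ^ 2) / (2 * n) := by
    ring
  calc _ = ∫ ξ, F (xbar + -(η / n) • ∑ i, G i (x i) (ξ i)) ∂Measure.pi μ := by
        simp_rw [neg_smul, ← sub_eq_add_neg]
        rfl
    _ ≤ F xbar + inner ℝ (gradient F xbar) (∫ ξ, -(η / n) • ∑ i, G i (x i) (ξ i) ∂Measure.pi μ)
          + L / 2 * ∫ ξ, ‖-(η / n) • ∑ i, G i (x i) (ξ i)‖ ^ 2 ∂Measure.pi μ :=
        integral_comp_add_le_of_lipschitz_gradient (fun z => (hFgrad z).differentiableAt) hlipF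
          ((memLp_sum_comp_eval fun i => hGint i (x i)).const_smul (-(η / n))) xbar
    _ ≤ _ := by
        rw [hmean, real_inner_smul_right]
        linarith [neg_inner_add_norm_sq_le (gradient F xbar) hbar hη.le hL,
          mul_le_mul_of_nonneg_left hsecond (by positivity : 0 ≤ L / 2),
          mul_le_mul_of_nonneg_left hbias (by positivity : 0 ≤ η / 2 + η ^ 2 * L)]

/-- One-step descent inequality (from the proof of Theorem 5 of the paper):
for `n` workers with `L`-smooth losses `f_i`, independent stochastic gradient
oracles `G i` with variance bound `σ_i²` and second-moment bound `Gbd²`, and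
points `x_1, …, x_n` with average `x̄`,
`E f(x̄ − (η/n)·Σ_i G_i(x_i, ξ_i)) ≤ f(x̄) − η(1/2 − ηL)‖∇f(x̄)‖²
  + (ηL²/2 + η²L³)(1/n)Σ_i ‖x̄ − x_i‖² + Lη²σ̄²/(2n)`. -/
theorem one_step_descent
    (n d : ℕ) (hn : 0 < n)
    (Ξ : Fin n → Type) [∀ i, MeasurableSpace (Ξ i)]
    (μ : ∀ i, Measure (Ξ i)) [∀ i, IsProbabilityMeasure (μ i)]
    (f : Fin n → EuclideanSpace ℝ (Fin d) → ℝ)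
    (L : ℝ) (hL : 0 ≤ L)
    (hdiff : ∀ i, Differentiable ℝ (f i))
    (hsmooth : ∀ i, ∀ x y : EuclideanSpace ℝ (Fin d),
      ‖gradient (f i) y - gradient (f i) x‖ ≤ L * ‖y - x‖)
    (G : ∀ i : Fin n, EuclideanSpace ℝ (Fin d) → Ξ i → EuclideanSpace ℝ (Fin d))
    (hGmeas : ∀ i, Measurable (Function.uncurry (G i)))
    (hGint : ∀ i x, MemLp (G i x) 2 (μ i))
    (σ : Fin n → ℝ) (Gbd : ℝ)
    (hunbiased : ∀ i x, ∫ ξ, G i x ξ ∂(μ i) = gradient (f i) x)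
    (hvar : ∀ i x, ∫ ξ, ‖G i x ξ - gradient (f i) x‖ ^ 2 ∂(μ i) ≤ σ i ^ 2)
    (hsecond : ∀ i x, ∫ ξ, ‖G i x ξ‖ ^ 2 ∂(μ i) ≤ Gbd ^ 2)
    (η : ℝ) (hη : 0 < η)
    (x : Fin n → EuclideanSpace ℝ (Fin d)) :
    ∫ ξ, (n : ℝ)⁻¹ * ∑ i, f i
          (((n : ℝ)⁻¹ • ∑ j, x j) - (η / n) • ∑ i, G i (x i) (ξ i))
        ∂(Measure.pi μ)
      ≤ (n : ℝ)⁻¹ * ∑ i, f i ((n : ℝ)⁻¹ • ∑ j, x j)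
        - η * (1 / 2 - η * L) *
          ‖gradient (fun y => (n : ℝ)⁻¹ * ∑ i, f i y) ((n : ℝ)⁻¹ • ∑ j, x j)‖ ^ 2
        + (η * L ^ 2 / 2 + η ^ 2 * L ^ 3) *
          ((n : ℝ)⁻¹ * ∑ i, ‖((n : ℝ)⁻¹ • ∑ j, x j) - x i‖ ^ 2)
        + L * η ^ 2 * ((n : ℝ)⁻¹ * ∑ i, σ i ^ 2) / (2 * n) :=
  one_step_descent_general n d hn Ξ μ f L hL hdiff hsmooth G hGint σ hunbiased hvar η hη x
end
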